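/- arXiv:1705.06616 — 6 statements merged into one kernel-verified Lean document; each statement's English description precedes it below -/
import Mathlib

section
/- For all integers m and all real numbers a, b: Σ_{m ∈ ℤ} sinc(m + a) · sinc(m + b) = sinc(b − a), where sinc(x) = sin(πx)/(πx) (with sinc(0)=1). -/
/-!
On the unit circle `ℝ/ℤ` let `e_c` be `x ↦ exp(-2πicx)` on the fundamental domain `(-1/2, 1/2]`.
Since `sinc` is the Fourier transform of the indicator of `[-1/2, 1/2]`, the `n`-th Fourier
coefficient of `e_c` is `sinc(n + c)`. Moreover `conj(e_a) e_b = e_{b-a}`, whose mean over the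
circle is `sinc(b - a)`; so the identity is Parseval's formula `⟪e_a, e_b⟫ = Σ conj(ê_a n) ê_b n`.
-/

/-- The normalized sinc function: sinc(x) = sin(πx)/(πx), sinc(0) = 1. -/
noncomputable def sinc (x : ℝ) : ℝ :=
  if x = 0 then 1 else Real.sin (Real.pi * x) / (Real.pi * x)

open MeasureTheory AddCircle Complex ComplexConjugate
open scoped Real

theorem tsum_conj_fourierCoeff_mul_fourierCoeff {T : ℝ} [Fact (0 < T)]
    (f g : Lp ℂ 2 (haarAddCircle (T := T))) :
    ∑' n : ℤ, conj (fourierCoeff f n) * fourierCoeff g n = inner ℂ f g := by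
  simp_rw [← fourierBasis_repr, fourierBasis.repr_apply_apply, inner_conj_symm]
  exact fourierBasis.tsum_inner_mul_inner f g

lemma integral_cexp_eq_sinc (c : ℝ) :
    ∫ x in (-(1/2) : ℝ)..1/2, cexp (-2 * π * I * c * x) = sinc c := by
  rcases eq_or_ne c 0 with rfl | hc
  · norm_num [sinc]
  have hk : -2 * π * I * c ≠ 0 := by simp [hc, Real.pi_ne_zero, I_ne_zero]
  rw [integral_exp_mul_complex hk, sinc, if_neg hc]
  push_cast
  rw [Complex.sin]
  field_simp
  ring_nf
  rw [I_sq]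
  ring

noncomputable def wrappedExp (c : ℝ) : UnitAddCircle → ℂ :=
  liftIoc 1 (-(1/2)) fun x => cexp (-2 * π * I * c * x)

lemma fourierCoeff_wrappedExp (c : ℝ) (n : ℤ) :
    fourierCoeff (wrappedExp c) n = sinc (n + c) := by
  rw [wrappedExp, fourierCoeff_liftIoc_eq, fourierCoeffOn_eq_integral, ← integral_cexp_eq_sinc]
  norm_num
  refine intervalIntegral.integral_congr fun x _ => ?_
  rw [← exp_conj, ← exp_add]
  simp only [map_mul, map_ofNat, conj_ofReal, conj_I, map_intCast]
  congr 1
  ring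

lemma integral_wrappedExp (c : ℝ) : ∫ x, wrappedExp c x ∂haarAddCircle = sinc c := by
  simpa [fourierCoeff, fourier_zero] using fourierCoeff_wrappedExp c 0

lemma conj_wrappedExp_mul (a b : ℝ) (x : UnitAddCircle) :
    conj (wrappedExp a x) * wrappedExp b x = wrappedExp (b - a) x := by
  simp only [wrappedExp, liftIoc, Function.comp_apply, Set.domRestrict_apply]
  rw [← exp_conj, ← exp_add]
  simp only [map_mul, map_neg, map_ofNat, conj_ofReal, conj_I]
  congr 1
  push_cast
  ring

lemma memLp_wrappedExp (c : ℝ) : MemLp (wrappedExp c) 2 haarAddCircle := by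
  have hcont : Continuous fun x : ℝ => cexp (-2 * π * I * c * x) := by fun_prop
  refine memLp_haarAddCircle_iff.2 <| MemLp.memLp_liftIoc <|
    MemLp.of_bound hcont.aestronglyMeasurable 1 (ae_of_all _ fun x => ?_)
  simp [norm_exp]

lemma inner_toLp_wrappedExp (a b : ℝ) :
    inner ℂ (memLp_wrappedExp a).toLp (memLp_wrappedExp b).toLp = (sinc (b - a) : ℂ) := by
  rw [L2.inner_def, ← integral_wrappedExp]
  refine integral_congr_ae ?_
  filter_upwards [(memLp_wrappedExp a).coeFn_toLp, (memLp_wrappedExp b).coeFn_toLp] with x ha hb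
  rw [ha, hb, RCLike.inner_apply', conj_wrappedExp_mul]

/-- Σ_{m ∈ ℤ} sinc(m + a) · sinc(m + b) = sinc(b − a). -/
theorem sinc_sum_identity (a b : ℝ) :
    ∑' m : ℤ, sinc ((m : ℝ) + a) * sinc ((m : ℝ) + b) = sinc (b - a) := by
  have parseval := tsum_conj_fourierCoeff_mul_fourierCoeff
    (memLp_wrappedExp a).toLp (memLp_wrappedExp b).toLp
  simp only [fourierCoeff_congr_ae (memLp_wrappedExp a).coeFn_toLp,
    fourierCoeff_congr_ae (memLp_wrappedExp b).coeFn_toLp, fourierCoeff_wrappedExp, conj_ofReal,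
    inner_toLp_wrappedExp] at parseval
  exact_mod_cast parseval
end

section
/- Let G : Finset V → ℝ be monotone and submodular with G(∅) = 0, and let S* maximize G over subsets of cardinality at most N. If S_gr is the output of the greedy algorithm that iteratively adds the element with largest marginal gain for N steps, then G(S_gr) ≥ (1 − (1 − 1/N)^N) · G(S*) ≥ (1 − 1/e) · G(S*). -/
/-- A set function with diminishing marginal gains. -/
def SubmodularFn {V : Type*} [DecidableEq V] (G : Finset V → ℝ) : Prop :=
  ∀ S T : Finset V, S ⊆ T → ∀ x ∉ T,
    G (insert x T) - G T ≤ G (insert x S) - G S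

/-- A monotone (increasing) set function. -/
def MonotoneFn {V : Type*} (G : Finset V → ℝ) : Prop :=
  ∀ S T : Finset V, S ⊆ T → G S ≤ G T

/-!
Comparing the optimum `S*` with a greedy iterate `Sᵢ`: by submodularity, adding the at most `N`
elements of `S*` to `Sᵢ` one at a time gains at most `N` times the best single marginal gain,
which is the greedy gain. Hence each greedy step closes at least a `1/N` fraction of the gap
`G S* - G Sᵢ`, so after `N` steps the gap is at most `(1 - 1/N)^N G S* ≤ e⁻¹ G S*`.
-/

section

open Finset

variable {V : Type*} [DecidableEq V] {G : Finset V → ℝ}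

lemma SubmodularFn.union_le_add_sum_gain (hsub : SubmodularFn G) (S T : Finset V) :
    G (S ∪ T) ≤ G S + ∑ x ∈ T, (G (insert x S) - G S) := by
  induction T using Finset.induction with
  | empty => simp
  | insert a T haT ih =>
    rw [sum_insert haT, union_insert]
    by_cases ha : a ∈ S ∪ T
    · have haS : a ∈ S := by simpa [haT] using ha
      simpa [insert_eq_of_mem ha, insert_eq_of_mem haS] using ih
    · linarith [hsub S (S ∪ T) subset_union_left a ha]

lemma MonotoneFn.le_add_card_mul_greedy_gain (hmono : MonotoneFn G) (hsub : SubmodularFn G)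
    {S : Finset V} {x : V} (hmax : ∀ y, G (insert y S) ≤ G (insert x S)) (T : Finset V) :
    G T ≤ G S + T.card * (G (insert x S) - G S) := by
  have hsum : ∑ y ∈ T, (G (insert y S) - G S) ≤ T.card • (G (insert x S) - G S) :=
    sum_le_card_nsmul _ _ _ fun y _ ↦ by linarith [hmax y]
  rw [nsmul_eq_mul] at hsum
  linarith [hmono T (S ∪ T) subset_union_right, hsub.union_le_add_sum_gain S T]

lemma MonotoneFn.greedy_gap_succ_le (hmono : MonotoneFn G) (hsub : SubmodularFn G)
    {N : ℕ} (hN : 0 < N) {S T : Finset V} (hT : T.card ≤ N) {x : V}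
    (hmax : ∀ y, G (insert y S) ≤ G (insert x S)) :
    G T - G (insert x S) ≤ (1 - 1 / (N : ℝ)) * (G T - G S) := by
  have hNpos : (0 : ℝ) < N := by exact_mod_cast hN
  have hgain : 0 ≤ G (insert x S) - G S := sub_nonneg.2 (hmono _ _ (subset_insert x S))
  have hcard : (T.card : ℝ) * (G (insert x S) - G S) ≤ N * (G (insert x S) - G S) :=
    mul_le_mul_of_nonneg_right (by exact_mod_cast hT) hgain
  have hgap : (G T - G S) / N ≤ G (insert x S) - G S := by
    rw [div_le_iff₀' hNpos]
    linarith [hmono.le_add_card_mul_greedy_gain hsub hmax T]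
  calc G T - G (insert x S) ≤ (G T - G S) - (G T - G S) / N := by linarith
    _ = (1 - 1 / (N : ℝ)) * (G T - G S) := by ring

lemma one_sub_inv_pow_le_inv_exp_one {N : ℕ} (hN : 0 < N) :
    (1 - 1 / (N : ℝ)) ^ N ≤ 1 / Real.exp 1 := by
  rw [one_div (Real.exp 1), ← Real.exp_neg]
  exact Real.one_sub_div_pow_le_exp_neg (by exact_mod_cast hN)

end

theorem greedy_submodular_max_general
    {V : Type*} [DecidableEq V]
    (G : Finset V → ℝ) (hmono : MonotoneFn G) (hsub : SubmodularFn G)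
    (h0 : G ∅ = 0) (N : ℕ) (hN : 0 < N)
    (S : ℕ → Finset V) (hS0 : S 0 = ∅)
    (hgreedy : ∀ i < N, ∃ x, x ∉ S i ∧ S (i + 1) = insert x (S i) ∧
        ∀ y : V, G (insert y (S i)) ≤ G (insert x (S i)))
    (Sstar : Finset V) (hopt : Sstar.card ≤ N ∧
        ∀ T : Finset V, T.card ≤ N → G T ≤ G Sstar) :
    (1 - (1 - 1 / (N : ℝ)) ^ N) * G Sstar ≤ G (S N) ∧
    (1 - 1 / Real.exp 1) * G Sstar ≤ (1 - (1 - 1 / (N : ℝ)) ^ N) * G Sstar := by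
  have hratio : (0 : ℝ) ≤ 1 - 1 / N := by
    rw [sub_nonneg, div_le_one (by exact_mod_cast hN)]
    exact_mod_cast hN
  have hgap : G Sstar - G (S N) ≤ (1 - 1 / (N : ℝ)) ^ N * G Sstar := by
    simpa [hS0, h0] using le_geom (u := fun i ↦ G Sstar - G (S i)) hratio N fun i hi ↦ by
      obtain ⟨x, -, hstep, hmax⟩ := hgreedy i hi
      simpa only [hstep] using hmono.greedy_gap_succ_le hsub hN hopt.1 hmax
  have hstar : 0 ≤ G Sstar := h0 ▸ hmono ∅ Sstar (Finset.empty_subset _)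
  have hexp := one_sub_inv_pow_le_inv_exp_one hN
  constructor <;> nlinarith

/-- Nemhauser–Wolsey–Fisher guarantee: the greedy algorithm for maximizing a
monotone submodular function under a cardinality constraint achieves at least
a (1 − (1 − 1/N)^N) ≥ (1 − 1/e) fraction of the optimum. The greedy iterates
are encoded by a chain S with S 0 = ∅ where each step inserts an element of
maximal marginal gain. -/
theorem greedy_submodular_max
    {V : Type*} [DecidableEq V] [Fintype V]
    (G : Finset V → ℝ) (hmono : MonotoneFn G) (hsub : SubmodularFn G)
    (h0 : G ∅ = 0) (N : ℕ) (hN : 0 < N)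
    (S : ℕ → Finset V) (hS0 : S 0 = ∅)
    (hgreedy : ∀ i < N, ∃ x, x ∉ S i ∧ S (i + 1) = insert x (S i) ∧
        ∀ y : V, G (insert y (S i)) ≤ G (insert x (S i)))
    (Sstar : Finset V) (hopt : Sstar.card ≤ N ∧
        ∀ T : Finset V, T.card ≤ N → G T ≤ G Sstar) :
    (1 - (1 - 1 / (N : ℝ)) ^ N) * G Sstar ≤ G (S N) ∧
    (1 - 1 / Real.exp 1) * G Sstar ≤ (1 - (1 - 1 / (N : ℝ)) ^ N) * G Sstar :=
  greedy_submodular_max_general G hmono hsub h0 N hN S hS0 hgreedy Sstar hopt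
end

section
/- Let M = (V, I) be a matroid and G : Finset V → ℝ a monotone submodular function with G(∅) = 0. The greedy algorithm that repeatedly adds the feasible element with largest marginal gain (maintaining independence in M) until no element can be added returns a set S_gr with G(S_gr) ≥ (1/2) · max_{S ∈ I} G(S). -/
/-!
Write `δ i = G (S (i + 1)) - G (S i)` for the greedy gains; submodularity and the greedy choice make
them nonincreasing. For `t ∈ T \ S n` let `k t` be the last step at which `t` could still be added.
The marginal gain of `t` on `S n` is at most its gain on `S (k t)`, hence at most `δ (k t)`. By the
exchange property at most `i` of these `t` have `k t < i`, so `∑ δ (k t)` is at most the sum of the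
first `#(T \ S n)` gains, which is at most `G (S n)`. Hence `G T ≤ G (S n) + ∑ δ (k t) ≤ 2 G (S n)`.
-/

open Finset

theorem Nat.exists_lt_and_not_succ {P : ℕ → Prop} (h0 : P 0) {n : ℕ} (hn : ¬ P n) :
    ∃ j < n, P j ∧ ¬ P (j + 1) := by
  induction n with
  | zero => exact absurd h0 hn
  | succ n ih =>
    by_cases hPn : P n
    · exact ⟨n, n.lt_succ_self, hPn, hn⟩
    · obtain ⟨j, hj, hPj⟩ := ih hPn
      exact ⟨j, hj.trans n.lt_succ_self, hPj⟩

/-- `hcard` says that the `j`-th smallest value of `k` on `D` is at least `j`, so the two sums can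
be compared termwise. -/
theorem Finset.sum_comp_le_sum_range_card {ι β : Type*} [DecidableEq ι] [AddCommMonoid β]
    [PartialOrder β] [IsOrderedAddMonoid β] (D : Finset ι) (k : ι → ℕ) {δ : ℕ → β} {n : ℕ}
    (hδ : AntitoneOn δ (Set.Iio n)) (hk : ∀ t ∈ D, k t < n)
    (hcard : ∀ t ∈ D, #{s ∈ D | k s ≤ k t} ≤ k t + 1) :
    ∑ t ∈ D, δ (k t) ≤ ∑ j ∈ range #D, δ j := by
  induction D using Finset.induction_on_max_value k with
  | empty => simp
  | insert a s ha hmax ih =>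
    have hs_le : #s ≤ k a := by
      have := hcard a (mem_insert_self a s)
      rwa [filter_true_of_mem fun x hx => ?_, card_insert_of_notMem ha, Nat.add_le_add_iff_right]
        at this
      rcases mem_insert.1 hx with rfl | hx
      exacts [le_rfl, hmax x hx]
    have hka := hk a (mem_insert_self a s)
    have ih' := ih (fun t ht => hk t (mem_insert_of_mem ht)) fun t ht =>
      (card_le_card (filter_subset_filter _ (subset_insert a s))).trans
        (hcard t (mem_insert_of_mem ht))
    rw [sum_insert ha, card_insert_of_notMem ha, sum_range_succ, add_comm]
    exact add_le_add ih' (hδ (hs_le.trans_lt hka) hka hs_le)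

section Submodular

variable {V : Type*} [DecidableEq V] {G : Finset V → ℝ}

theorem SubmodularFn.le_add_sum_marginal (hsub : SubmodularFn G) (S D : Finset V)
    (hD : Disjoint S D) : G (S ∪ D) ≤ G S + ∑ t ∈ D, (G (insert t S) - G S) := by
  induction D using Finset.induction_on with
  | empty => simp
  | insert a D ha ih =>
    rw [disjoint_insert_right] at hD
    have hgain := hsub S (S ∪ D) subset_union_left a (by simp [hD.1, ha])
    rw [union_insert, sum_insert ha]
    linarith [ih hD.2]

theorem le_add_sum_sdiff_marginal (hmono : MonotoneFn G) (hsub : SubmodularFn G)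
    (S T : Finset V) : G T ≤ G S + ∑ t ∈ T \ S, (G (insert t S) - G S) := by
  calc G T ≤ G (S ∪ (T \ S)) := hmono _ _ (by simp)
    _ ≤ _ := hsub.le_add_sum_marginal S (T \ S) disjoint_sdiff

end Submodular

theorem card_le_card_of_forall_not_indep_insert {V : Type*} [DecidableEq V]
    {Indep : Finset V → Prop}
    (h_exch : ∀ X Y : Finset V, Indep X → Indep Y → X.card < Y.card →
        ∃ e ∈ Y \ X, Indep (insert e X))
    {X A : Finset V} (hX : Indep X) (hA : Indep A) (hmax : ∀ e ∈ A \ X, ¬ Indep (insert e X)) :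
    #A ≤ #X := by
  by_contra! hlt
  obtain ⟨e, he, hins⟩ := h_exch X A hX hA hlt
  exact hmax e he hins

section Greedy

variable {V : Type*} [DecidableEq V] {Indep : Finset V → Prop} {G : Finset V → ℝ}

def IsGreedyStep (Indep : Finset V → Prop) (G : Finset V → ℝ) (A B : Finset V) : Prop :=
  ∃ x, x ∉ A ∧ Indep (insert x A) ∧ B = insert x A ∧
    ∀ y ∉ A, Indep (insert y A) → G (insert y A) - G A ≤ G (insert x A) - G A

namespace IsGreedyStep

variable {A B : Finset V}

theorem subset (h : IsGreedyStep Indep G A B) : A ⊆ B := by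
  obtain ⟨x, -, -, rfl, -⟩ := h
  exact subset_insert x A

theorem indep (h : IsGreedyStep Indep G A B) : Indep B := by
  obtain ⟨x, -, hx, rfl, -⟩ := h
  exact hx

theorem card (h : IsGreedyStep Indep G A B) : #B = #A + 1 := by
  obtain ⟨x, hx, -, rfl, -⟩ := h
  exact card_insert_of_notMem hx

theorem marginal_le (h : IsGreedyStep Indep G A B) {y : V} (hy : y ∉ A)
    (hfeas : Indep (insert y A)) : G (insert y A) - G A ≤ G B - G A := by
  obtain ⟨x, -, -, rfl, hbest⟩ := h
  exact hbest y hy hfeas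

end IsGreedyStep

def IsGreedyRun (Indep : Finset V → Prop) (G : Finset V → ℝ) (n : ℕ) (S : ℕ → Finset V) : Prop :=
  ∀ i < n, IsGreedyStep Indep G (S i) (S (i + 1))

namespace IsGreedyRun

variable {n : ℕ} {S : ℕ → Finset V}

theorem monotoneOn (hrun : IsGreedyRun Indep G n S) : MonotoneOn S (Set.Iic n) :=
  monotoneOn_of_le_succ Set.ordConnected_Iic fun i _ _ hi => (hrun i hi).subset

theorem subset (hrun : IsGreedyRun Indep G n S) {i j : ℕ} (hij : i ≤ j) (hj : j ≤ n) :
    S i ⊆ S j :=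
  hrun.monotoneOn (Set.mem_Iic.2 (hij.trans hj)) (Set.mem_Iic.2 hj) hij

theorem card (hrun : IsGreedyRun Indep G n S) (hS0 : S 0 = ∅) : ∀ i ≤ n, #(S i) = i := by
  intro i
  induction i with
  | zero => simp [hS0]
  | succ i ih => intro hi; rw [(hrun i hi).card, ih (Nat.le_of_succ_le hi)]

theorem indep (hrun : IsGreedyRun Indep G n S) (h_empty : Indep ∅) (hS0 : S 0 = ∅) :
    ∀ i ≤ n, Indep (S i)
  | 0, _ => hS0 ▸ h_empty
  | i + 1, hi => (hrun i hi).indep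

theorem card_le_of_forall_not_indep_insert (hrun : IsGreedyRun Indep G n S)
    (h_empty : Indep ∅) (h_exch : ∀ X Y : Finset V, Indep X → Indep Y → X.card < Y.card →
        ∃ e ∈ Y \ X, Indep (insert e X))
    (hS0 : S 0 = ∅) {i : ℕ} (hi : i ≤ n) {A : Finset V} (hA : Indep A)
    (hmax : ∀ e ∈ A \ S i, ¬ Indep (insert e (S i))) : #A ≤ i :=
  hrun.card hS0 i hi ▸
    card_le_card_of_forall_not_indep_insert h_exch (hrun.indep h_empty hS0 i hi) hA hmax

theorem marginal_le_gain (hrun : IsGreedyRun Indep G n S) (hsub : SubmodularFn G) {j : ℕ}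
    (hj : j < n) {t : V} (ht : t ∉ S n) (hfeas : Indep (insert t (S j))) :
    G (insert t (S n)) - G (S n) ≤ G (S (j + 1)) - G (S j) := by
  have hsubset := hrun.subset hj.le le_rfl
  exact (hsub _ _ hsubset t ht).trans
    ((hrun j hj).marginal_le (fun h => ht (hsubset h)) hfeas)

theorem gain_antitoneOn (hrun : IsGreedyRun Indep G n S)
    (h_down : ∀ X Y : Finset V, X ⊆ Y → Indep Y → Indep X) (hsub : SubmodularFn G) :
    AntitoneOn (fun i => G (S (i + 1)) - G (S i)) (Set.Iio n) := by
  refine antitoneOn_of_succ_le Set.ordConnected_Iio fun i _ hi hi1 => ?_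
  simp only [Set.mem_Iio, Order.succ_eq_add_one] at hi hi1 ⊢
  have hsubset := (hrun i hi).subset
  obtain ⟨x, hx, hfeas, hS, -⟩ := hrun (i + 1) hi1
  -- submodularity moves `x` back to `S i`, where the greedy choice dominates it
  have hsub_x := hsub _ _ hsubset x hx
  have hgreedy := (hrun i hi).marginal_le (fun h => hx (hsubset h))
    (h_down _ _ (insert_subset_insert x hsubset) hfeas)
  rw [hS]
  linarith

end IsGreedyRun

end Greedy

theorem matroid_greedy_half_approx_general
    {V : Type*} [DecidableEq V]
    (Indep : Finset V → Prop)
    (h_empty : Indep ∅)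
    (h_down : ∀ X Y : Finset V, X ⊆ Y → Indep Y → Indep X)
    (h_exch : ∀ X Y : Finset V, Indep X → Indep Y → X.card < Y.card →
        ∃ e ∈ Y \ X, Indep (insert e X))
    (G : Finset V → ℝ) (hmono : MonotoneFn G) (hsub : SubmodularFn G)
    (h0 : G ∅ = 0)
    (n : ℕ) (S : ℕ → Finset V) (hS0 : S 0 = ∅)
    (hstep : ∀ i < n, ∃ x, x ∉ S i ∧ Indep (insert x (S i)) ∧
        S (i + 1) = insert x (S i) ∧
        ∀ y ∉ S i, Indep (insert y (S i)) →
          G (insert y (S i)) - G (S i) ≤ G (insert x (S i)) - G (S i))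
    (hstop : ∀ y ∉ S n, ¬ Indep (insert y (S n)))
    (T : Finset V) (hT : Indep T) :
    (1 / 2 : ℝ) * G T ≤ G (S n) := by
  change IsGreedyRun Indep G n S at hstep
  set D := T \ S n
  have hD_indep : ∀ A ⊆ D, Indep A := fun A hA => h_down A T (hA.trans sdiff_subset) hT
  have hlast : ∀ t ∈ D, ∃ j < n, Indep (insert t (S j)) ∧ ¬ Indep (insert t (S (j + 1))) :=
    fun t ht => Nat.exists_lt_and_not_succ (P := fun j => Indep (insert t (S j)))
      (by simpa [hS0] using hD_indep {t} (by simpa using ht)) (hstop t (mem_sdiff.1 ht).2)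
  choose! k hkn hk_feas hk_infeas using hlast
  have hcount : ∀ t ∈ D, #{s ∈ D | k s ≤ k t} ≤ k t + 1 := by
    refine fun t ht => hstep.card_le_of_forall_not_indep_insert h_empty h_exch hS0 (hkn t ht)
      (hD_indep _ (filter_subset _ _)) fun s hs hfeas => ?_
    obtain ⟨hsD, hks⟩ := mem_filter.1 (mem_sdiff.1 hs).1
    exact hk_infeas s hsD (h_down _ _
      (insert_subset_insert s (hstep.subset (by omega) (hkn t ht))) hfeas)
  have hDn : #D ≤ n := hstep.card_le_of_forall_not_indep_insert h_empty h_exch hS0 le_rfl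
    (hD_indep D subset_rfl) fun s hs => hstop s (mem_sdiff.1 hs).2
  have hsum : ∑ t ∈ D, (G (S (k t + 1)) - G (S (k t))) ≤ G (S n) :=
    calc _ ≤ ∑ j ∈ range #D, (G (S (j + 1)) - G (S j)) :=
          D.sum_comp_le_sum_range_card k (hstep.gain_antitoneOn h_down hsub) hkn hcount
      _ = G (S #D) := by rw [sum_range_sub (fun i => G (S i)), hS0, h0, sub_zero]
      _ ≤ G (S n) := hmono _ _ (hstep.subset hDn le_rfl)
  have hgain := sum_le_sum fun t ht =>
    hstep.marginal_le_gain hsub (hkn t ht) (mem_sdiff.1 ht).2 (hk_feas t ht)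
  linarith [le_add_sum_sdiff_marginal hmono hsub (S n) T]

/-- Greedy maximization of a monotone submodular function subject to a matroid
independence constraint achieves a 1/2-approximation: G(S_gr) ≥ (1/2)·max_{S ∈ I} G(S).
The matroid is given by its independence predicate `Indep`, and the greedy run is
a chain S with S 0 = ∅, each step adding a feasible element of maximal marginal
gain, stopping (after n steps) when no feasible element remains. -/
theorem matroid_greedy_half_approx
    {V : Type*} [DecidableEq V] [Fintype V]
    (Indep : Finset V → Prop)
    (h_empty : Indep ∅)
    (h_down : ∀ X Y : Finset V, X ⊆ Y → Indep Y → Indep X)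
    (h_exch : ∀ X Y : Finset V, Indep X → Indep Y → X.card < Y.card →
        ∃ e ∈ Y \ X, Indep (insert e X))
    (G : Finset V → ℝ) (hmono : MonotoneFn G) (hsub : SubmodularFn G)
    (h0 : G ∅ = 0)
    (n : ℕ) (S : ℕ → Finset V) (hS0 : S 0 = ∅)
    (hstep : ∀ i < n, ∃ x, x ∉ S i ∧ Indep (insert x (S i)) ∧
        S (i + 1) = insert x (S i) ∧
        ∀ y ∉ S i, Indep (insert y (S i)) →
          G (insert y (S i)) - G (S i) ≤ G (insert x (S i)) - G (S i))
    (hstop : ∀ y ∉ S n, ¬ Indep (insert y (S n)))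
    (T : Finset V) (hT : Indep T) :
    (1 / 2 : ℝ) * G T ≤ G (S n) :=
  matroid_greedy_half_approx_general Indep h_empty h_down h_exch G hmono hsub h0 n S hS0 hstep hstop
    T hT
end

section
/- Let X, Y, Z be jointly Gaussian random vectors where the coordinates of the observation vector are conditionally independent given the parameter vector β. Then the set function G(S) = I(f_S ; β), the mutual information between the measurements indexed by S and β, is submodular: for S ⊆ T and x ∉ T, G(S ∪ {x}) − G(S) ≥ G(T ∪ {x}) − G(T). -/
/-!
By the Schur complement formula, `G (S ∪ {x}) - G S = log Var(f_x | f_S) - log σ_w²`, where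
`Var(f_x | f_S) = det Σ[S ∪ {x}] / det Σ[S]` is the Schur complement of `Σ[S, S]` in
`Σ[S ∪ {x}, S ∪ {x}]`. Completing the square shows that it is the minimum of `wᴴ Σ w` over the
`w` with `w_x = 1` supported on `S ∪ {x}`: the error of the best linear prediction of `f_x` from
`f_S`. Enlarging `S` enlarges the set minimized over, so the conditional variance can only drop.
-/

open Matrix
open scoped ComplexOrder

namespace Matrix

section SchurComplement

variable {m n R : Type*} [Fintype m] [DecidableEq m] [Fintype n] [CommRing R] [StarRing R]
  {A : Matrix m m R} [Invertible A]

theorem schur_complement_le₁₁ [PartialOrder R] [StarOrderedRing R] (hA : A.PosSemidef)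
    (B : Matrix m n R) (D : Matrix n n R) (x : m → R) (y : n → R) :
    star y ⬝ᵥ (D - Bᴴ * A⁻¹ * B) *ᵥ y ≤ star (x ⊕ᵥ y) ⬝ᵥ fromBlocks A B Bᴴ D *ᵥ (x ⊕ᵥ y) := by
  simp only [dotProduct_mulVec]
  rw [schur_complement_eq₁₁ B D x y hA.1]
  refine le_add_of_nonneg_left ?_
  simpa only [dotProduct_mulVec] using hA.dotProduct_mulVec_nonneg _

theorem schur_complement_attained₁₁ (hA : A.IsHermitian) (B : Matrix m n R) (D : Matrix n n R)
    (y : n → R) :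
    star (-((A⁻¹ * B) *ᵥ y) ⊕ᵥ y) ⬝ᵥ fromBlocks A B Bᴴ D *ᵥ (-((A⁻¹ * B) *ᵥ y) ⊕ᵥ y) =
      star y ⬝ᵥ (D - Bᴴ * A⁻¹ * B) *ᵥ y := by
  rw [dotProduct_mulVec, schur_complement_eq₁₁ B D _ y hA, neg_add_cancel, dotProduct_zero,
    zero_add, dotProduct_mulVec]

end SchurComplement

section Submatrix

variable {κ V R : Type*} [CommSemiring R] [StarRing R]

theorem dotProduct_mulVec_submatrix_comp [Fintype κ] [Fintype V] (M : Matrix V V R) {e : κ → V}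
    (he : Function.Injective e) {w : V → R} (hw : ∀ i ∉ Set.range e, w i = 0) :
    star (w ∘ e) ⬝ᵥ M.submatrix e e *ᵥ (w ∘ e) = star w ⬝ᵥ M *ᵥ w := by
  have hMw : M.submatrix e e *ᵥ (w ∘ e) = (M *ᵥ w) ∘ e := by
    ext k
    exact Fintype.sum_of_injective e he _ _ (fun j hj => by simp [hw j hj]) fun _ => rfl
  rw [hMw]
  exact Fintype.sum_of_injective e he _ _ (fun i hi => by simp [hw i hi]) fun _ => rfl

theorem IsHermitian.submatrix_sumElim {M : Matrix V V R} (hM : M.IsHermitian) {m n : Type*}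
    (f : m → V) (g : n → V) :
    M.submatrix (f ⊕ᵥ g) (f ⊕ᵥ g) =
      Matrix.fromBlocks (M.submatrix f f) (M.submatrix f g) (M.submatrix f g)ᴴ
        (M.submatrix g g) := by
  ext (i | i) (j | j)
  · rfl
  · rfl
  · exact (hM.apply _ _).symm
  · rfl

end Submatrix

theorem injective_sumElim_val_const {V : Type*} {S : Finset V} {x : V} (hx : x ∉ S) :
    Function.Injective (((↑) : S → V) ⊕ᵥ fun _ : Unit => x) :=
  Subtype.val_injective.sumElim (fun _ _ _ => rfl) fun i _ h => hx (h ▸ i.2)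

section PrincipalMinor

variable {V 𝕜 : Type*} [RCLike 𝕜] [DecidableEq V]

noncomputable def principalMinor (M : Matrix V V 𝕜) (S : Finset V) : 𝕜 :=
  (M.submatrix (fun i : S => (i : V)) (fun i : S => (i : V))).det

/-- For the covariance matrix `M` of a Gaussian vector `f`, this is `Var(f_x | f_S)`: the Schur
complement of `M[S, S]` in `M[S ∪ {x}, S ∪ {x}]`. -/
noncomputable def condVar (M : Matrix V V 𝕜) (S : Finset V) (x : V) : 𝕜 :=
  (M.submatrix (fun _ : Unit => x) (fun _ : Unit => x) -
    (M.submatrix (fun i : S => (i : V)) fun _ : Unit => x)ᴴ *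
      (M.submatrix (fun i : S => (i : V)) fun i : S => (i : V))⁻¹ *
      M.submatrix (fun i : S => (i : V)) fun _ : Unit => x) () ()

theorem range_sumElim_val_const (S : Finset V) (x : V) :
    Set.range (((↑) : S → V) ⊕ᵥ fun _ : Unit => x) = ↑(insert x S) := by
  ext v
  simp [eq_comm]

theorem det_submatrix_eq_principalMinor {κ : Type*} [Fintype κ] [DecidableEq κ]
    (M : Matrix V V 𝕜) {S : Finset V} {e : κ → V} (he : Function.Injective e)
    (hS : Set.range e = S) : (M.submatrix e e).det = M.principalMinor S :=
  det_submatrix_equiv_self ((Equiv.ofInjective e he).trans (Equiv.setCongr hS) : κ ≃ S)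
    (M.submatrix (fun i : S => (i : V)) fun i : S => (i : V))

theorem principalMinor_insert {M : Matrix V V 𝕜} (hM : M.PosDef) {S : Finset V} {x : V}
    (hx : x ∉ S) : M.principalMinor (insert x S) = M.principalMinor S * M.condVar S x := by
  have := (hM.submatrix (Subtype.val_injective (p := (· ∈ S)))).isUnit.invertible
  rw [← det_submatrix_eq_principalMinor M (injective_sumElim_val_const hx)
    (range_sumElim_val_const S x), hM.1.submatrix_sumElim, det_fromBlocks₁₁,
    det_unique (n := Unit), invOf_eq_nonsing_inv]
  rfl

theorem principalMinor_pos {M : Matrix V V 𝕜} (hM : M.PosDef) (S : Finset V) :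
    0 < M.principalMinor S :=
  (hM.submatrix Subtype.val_injective).det_pos

theorem condVar_pos {M : Matrix V V 𝕜} (hM : M.PosDef) {S : Finset V} {x : V} (hx : x ∉ S) :
    0 < M.condVar S x :=
  pos_of_mul_pos_right (principalMinor_insert hM hx ▸ principalMinor_pos hM _)
    (principalMinor_pos hM S).le

theorem log_re_principalMinor_insert {M : Matrix V V 𝕜} (hM : M.PosDef) {S : Finset V} {x : V}
    (hx : x ∉ S) :
    Real.log (RCLike.re (M.principalMinor (insert x S))) =
      Real.log (RCLike.re (M.principalMinor S)) + Real.log (RCLike.re (M.condVar S x)) := by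
  obtain ⟨hS, hSim⟩ := RCLike.pos_iff.mp (principalMinor_pos hM S)
  obtain ⟨hc, -⟩ := RCLike.pos_iff.mp (condVar_pos hM hx)
  rw [principalMinor_insert hM hx, RCLike.mul_re, hSim, zero_mul, sub_zero,
    Real.log_mul hS.ne' hc.ne']

variable [Fintype V]

theorem condVar_le_dotProduct_mulVec {M : Matrix V V 𝕜} (hM : M.PosDef) {S : Finset V} {x : V}
    (hx : x ∉ S) {w : V → 𝕜} (hwx : w x = 1) (hw : ∀ i ∉ insert x S, w i = 0) :
    M.condVar S x ≤ star w ⬝ᵥ M *ᵥ w := by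
  have hwe : w ∘ (((↑) : S → V) ⊕ᵥ fun _ : Unit => x) = (w ∘ (↑)) ⊕ᵥ fun _ => 1 := by
    ext (i | i)
    · rfl
    · exact hwx
  have hA := hM.submatrix (Subtype.val_injective (p := (· ∈ S)))
  have := hA.isUnit.invertible
  rw [← dotProduct_mulVec_submatrix_comp M (injective_sumElim_val_const hx)
    (by simpa [range_sumElim_val_const] using hw), hM.1.submatrix_sumElim, hwe]
  refine le_of_eq_of_le ?_ (schur_complement_le₁₁ hA.posSemidef _ _ _ _)
  simp [dotProduct, mulVec, condVar]

theorem exists_dotProduct_mulVec_eq_condVar {M : Matrix V V 𝕜} (hM : M.PosDef) {S : Finset V}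
    {x : V} (hx : x ∉ S) :
    ∃ w : V → 𝕜, w x = 1 ∧ (∀ i ∉ insert x S, w i = 0) ∧ star w ⬝ᵥ M *ᵥ w = M.condVar S x := by
  set e := ((↑) : S → V) ⊕ᵥ fun _ : Unit => x
  have he : Function.Injective e := injective_sumElim_val_const hx
  have hA := hM.submatrix (Subtype.val_injective (p := (· ∈ S)))
  have := hA.isUnit.invertible
  set u : S ⊕ Unit → 𝕜 := -(((M.submatrix (fun i : S => (i : V)) fun i : S => (i : V))⁻¹ *
    M.submatrix (fun i : S => (i : V)) fun _ : Unit => x) *ᵥ fun _ => 1) ⊕ᵥ fun _ => 1 with hu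
  have hsupp : ∀ i ∉ Set.range e, Function.extend e u 0 i = 0 := fun i hi =>
    Function.extend_apply' _ _ _ (by simpa using hi)
  refine ⟨Function.extend e u 0, he.extend_apply u 0 (.inr ()), ?_, ?_⟩
  · simpa [e, range_sumElim_val_const] using hsupp
  rw [← dotProduct_mulVec_submatrix_comp M he hsupp, Function.extend_comp he,
    hM.1.submatrix_sumElim, hu, schur_complement_attained₁₁ hA.1]
  simp [dotProduct, mulVec, condVar]

theorem condVar_antitone {M : Matrix V V 𝕜} (hM : M.PosDef) {S T : Finset V} (hST : S ⊆ T)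
    {x : V} (hx : x ∉ T) : M.condVar T x ≤ M.condVar S x := by
  obtain ⟨w, hwx, hw, hQ⟩ := exists_dotProduct_mulVec_eq_condVar hM fun h => hx (hST h)
  exact hQ ▸ condVar_le_dotProduct_mulVec hM hx hwx fun i hi =>
    hw i fun h => hi (Finset.insert_subset_insert x hST h)

end PrincipalMinor

end Matrix

/-- In the jointly Gaussian measurement model f = Kβ + w with the noise
independent across coordinates (so the observations are conditionally
independent given β, and the joint covariance is Σ_f = K Σ_β Kᴴ + σ_w² I),
the mutual information G(S) = I(f_S ; β) = H(f_S) − H(w_S)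
 = log det(Σ_f[S,S]) − |S| log σ_w² is a submodular set function. -/
theorem mutual_info_submodular
    {V ι : Type*} [DecidableEq V] [Fintype V] [Fintype ι]
    (K : Matrix V ι ℂ) (Sb : Matrix ι ι ℂ) (hSb : Sb.PosSemidef)
    (σw : ℝ) (hσw : 0 < σw)
    (G : Finset V → ℝ)
    (hG : ∀ S : Finset V,
      G S = Real.log (((K * Sb * Kᴴ + ((σw : ℂ) ^ 2) • (1 : Matrix V V ℂ)).submatrix
              (fun i : {v // v ∈ S} => (i : V)) (fun i : {v // v ∈ S} => (i : V))).det.re)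
            - (S.card : ℝ) * Real.log (σw ^ 2))
    (S T : Finset V) (hST : S ⊆ T) (x : V) (hx : x ∉ T) :
    G (insert x T) - G T ≤ G (insert x S) - G S := by
  set M := K * Sb * Kᴴ + ((σw : ℂ) ^ 2) • (1 : Matrix V V ℂ)
  have hσw2 : (0 : ℂ) < (σw : ℂ) ^ 2 := by exact_mod_cast pow_pos hσw 2
  have hM : M.PosDef :=
    PosDef.posSemidef_add (hSb.mul_mul_conjTranspose_same K) (PosDef.one.smul hσw2)
  have hgain : ∀ A : Finset V, x ∉ A →
      G (insert x A) - G A = Real.log (M.condVar A x).re - Real.log (σw ^ 2) := by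
    intro A hA
    have hlog := log_re_principalMinor_insert hM hA
    simp only [RCLike.re_to_complex, principalMinor] at hlog
    rw [hG, hG, Finset.card_insert_of_notMem hA]
    push_cast
    linarith
  rw [hgain T hx, hgain S fun h => hx (hST h)]
  have hc := RCLike.pos_iff.mp (condVar_pos hM hx)
  have hle := RCLike.le_iff_re_im.mp (condVar_antitone hM hST hx)
  simp only [RCLike.re_to_complex] at hc hle
  linarith [Real.log_le_log hc.1 hle.1]
end

section
/- More generally, with (σ_m²) symmetric and nonincreasing in |m| as above, and I a finite set of consecutive integers containing 0, the function x ↦ Σ_{m∉I} sinc²(m + x) σ_m² over ℝ is maximized by choosing x = −m₀ for m₀ the element of ℤ∖I of smallest absolute value (an integer grid point adjacent to I). -/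
open scoped Real
open Complex MeasureTheory

lemma sinc_eq_real_sinc (x : ℝ) : sinc x = Real.sinc (π * x) := by
  simp [sinc, Real.sinc, Real.pi_ne_zero]

lemma sinc_neg (x : ℝ) : sinc (-x) = sinc x := by
  simp [sinc_eq_real_sinc]

lemma sinc_intCast_eq_zero {m : ℤ} (hm : m ≠ 0) : sinc m = 0 := by
  simp [sinc, hm, mul_comm π, Real.sin_int_mul_pi]

lemma norm_integral_exp_two_pi_I_mul (y : ℝ) :
    ‖∫ t in (0 : ℝ)..1, exp (2 * π * I * y * t)‖ = |sinc y| := by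
  rcases eq_or_ne y 0 with rfl | hy
  · simp [sinc]
  have hc : 2 * π * I * y ≠ 0 := by simp [Real.pi_ne_zero, hy]
  rw [integral_exp_mul_complex hc, norm_div, ofReal_one, ofReal_zero, mul_one, mul_zero, exp_zero,
    show 2 * π * I * y = I * ((2 * π * y : ℝ) : ℂ) by push_cast; ring,
    norm_exp_I_mul_ofReal_sub_one, show 2 * π * y / 2 = π * y by ring, sinc, if_neg hy]
  simp [abs_div, abs_mul, abs_of_pos Real.pi_pos, mul_assoc, mul_div_mul_left]

lemma hasSum_sinc_sq_add (x : ℝ) : HasSum (fun m : ℤ => sinc (m + x) ^ 2) 1 := by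
  let f : ℝ → ℂ := fun t => exp (2 * π * I * (-x : ℝ) * t)
  have hf : MemLp f 2 (volume.restrict (Set.Ioc 0 1)) :=
    .of_bound (by fun_prop : Continuous f).aestronglyMeasurable 1
      (ae_of_all _ fun t => by simp [f, norm_exp])
  convert hasSum_sq_fourierCoeffOn zero_lt_one hf using 1
  · ext m
    have hcoeff : ∀ t : ℝ, fourier (-m) (t : AddCircle ((1 : ℝ) - 0)) • f t
        = exp (2 * π * I * (-(m + x) : ℝ) * t) := fun t => by
      rw [fourier_coe_apply, smul_eq_mul, ← exp_add]
      push_cast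
      ring_nf
    simp only [fourierCoeffOn_eq_integral, hcoeff, sub_zero, div_one, one_smul,
      norm_integral_exp_two_pi_I_mul, sinc_neg, sq_abs]
  · simp [f, norm_exp]

lemma tsum_sinc_sq_add_mul_le {w : ℤ → ℝ} {c : ℝ} (x : ℝ) (hw₀ : ∀ m, 0 ≤ w m)
    (hwc : ∀ m, w m ≤ c) : ∑' m : ℤ, sinc (m + x) ^ 2 * w m ≤ c := by
  have hc := (hasSum_sinc_sq_add x).mul_right c
  have hle : ∀ m : ℤ, sinc (m + x) ^ 2 * w m ≤ sinc (m + x) ^ 2 * c :=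
    fun m => mul_le_mul_of_nonneg_left (hwc m) (sq_nonneg _)
  have hsum : Summable fun m : ℤ => sinc (m + x) ^ 2 * w m :=
    .of_nonneg_of_le (fun m => mul_nonneg (sq_nonneg _) (hw₀ m)) hle hc.summable
  simpa using hsum.tsum_le_tsum hle hc.summable |>.trans_eq hc.tsum_eq

lemma tsum_sinc_sq_add_neg_intCast_mul (n : ℤ) (w : ℤ → ℝ) :
    ∑' m : ℤ, sinc (m + -(n : ℝ)) ^ 2 * w m = w n := by
  rw [tsum_eq_single n fun m hm => ?_]
  · simp [sinc]
  · rw [← sub_eq_add_neg, ← Int.cast_sub, sinc_intCast_eq_zero (sub_ne_zero.mpr hm)]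
    ring

lemma apply_le_apply_of_abs_le_abs {α β : Type*} [AddCommGroup α] [LinearOrder α]
    [IsOrderedAddMonoid α] [Preorder β] {σ : α → β} (hsymm : ∀ m, σ (-m) = σ m)
    (hmono : ∀ m₁ m₂, 0 ≤ m₁ → m₁ < m₂ → σ m₂ ≤ σ m₁) {m n : α} (h : |n| ≤ |m|) :
    σ m ≤ σ n := by
  have habs : ∀ k, σ |k| = σ k := fun k => by
    rcases abs_choice k with hk | hk <;> simp [hk, hsymm]
  rw [← habs m, ← habs n]
  rcases h.lt_or_eq with hlt | heq
  · exact hmono _ _ (abs_nonneg n) hlt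
  · rw [heq]

theorem sinc_truncated_sum_maximized_general
    (σ : ℤ → ℝ) (hpos : ∀ m, 0 ≤ σ m) (hsymm : ∀ m, σ (-m) = σ m)
    (hmono : ∀ m₁ m₂ : ℤ, 0 ≤ m₁ → m₁ < m₂ → σ m₂ ≤ σ m₁)
    (I : Finset ℤ)
    (m₀ : ℤ) (hm₀ : m₀ ∉ I) (hmin : ∀ m : ℤ, m ∉ I → |m₀| ≤ |m|)
    (x : ℝ) :
    ∑' m : ℤ, (if m ∈ I then 0 else sinc ((m : ℝ) + x) ^ 2 * σ m)
      ≤ ∑' m : ℤ, (if m ∈ I then 0 else sinc ((m : ℝ) + (-(m₀ : ℝ))) ^ 2 * σ m) := by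
  have hweights : ∀ y : ℝ, (fun m : ℤ => if m ∈ I then 0 else sinc ((m : ℝ) + y) ^ 2 * σ m)
      = fun m : ℤ => sinc ((m : ℝ) + y) ^ 2 * if m ∈ I then 0 else σ m :=
    fun y => funext fun m => by split_ifs <;> simp
  rw [hweights, hweights, tsum_sinc_sq_add_neg_intCast_mul, if_neg hm₀]
  refine tsum_sinc_sq_add_mul_le x (fun m => ?_) (fun m => ?_)
  · split_ifs
    exacts [le_rfl, hpos m]
  · split_ifs with hm
    · exact hpos m₀
    · exact apply_le_apply_of_abs_le_abs hsymm hmono (hmin m hm)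

/-- With (σ_m²) nonnegative, symmetric, nonincreasing in |m|, and I a finite set
of consecutive integers containing 0, the function
x ↦ Σ_{m∉I} sinc²(m + x) σ_m² is maximized at x = −m₀, where m₀ is an element
of ℤ∖I of smallest absolute value. -/
theorem sinc_truncated_sum_maximized
    (σ : ℤ → ℝ) (hpos : ∀ m, 0 ≤ σ m) (hsymm : ∀ m, σ (-m) = σ m)
    (hmono : ∀ m₁ m₂ : ℤ, 0 ≤ m₁ → m₁ < m₂ → σ m₂ ≤ σ m₁)
    (I : Finset ℤ) (h0I : (0 : ℤ) ∈ I)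
    (hconsec : ∀ a b c : ℤ, a ∈ I → c ∈ I → a ≤ b → b ≤ c → b ∈ I)
    (m₀ : ℤ) (hm₀ : m₀ ∉ I) (hmin : ∀ m : ℤ, m ∉ I → |m₀| ≤ |m|)
    (x : ℝ) :
    ∑' m : ℤ, (if m ∈ I then 0 else sinc ((m : ℝ) + x) ^ 2 * σ m)
      ≤ ∑' m : ℤ, (if m ∈ I then 0 else sinc ((m : ℝ) + (-(m₀ : ℝ))) ^ 2 * σ m) :=
  sinc_truncated_sum_maximized_general σ hpos hsymm hmono I m₀ hm₀ hmin x
end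

section
/- Under the truncation conditions of the finite-dimensional approximation, if ε = Σ_{m ∉ M} σ_m² satisfies ε < σ_w² N^{−3/2}, then −N log(1 + ε N^{3/2}/σ_w²) ≤ I(f̃_S ; {β_m}) − I(f̂_S ; β) ≤ −N log(1 − ε N^{3/2}/σ_w²). -/
/-!
Write `Σ̂ = σ_w² I + G_M` and `Σ̃ = Σ̂ + E`, where `G_M` and `E` are the Gram matrices
`∑ σ_m k_m k_mᵀ` over `m ∈ M` and `m ∉ M`, with `k_m = (K_{nm})_n`. Both are positive
semidefinite, and `|K_{nm}| ≤ 1` with Cauchy–Schwarz gives `E ≤ εN · I ≤ c Σ̂` for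
`c = εN / σ_w²`. Hence `Σ̂ ≤ Σ̃ ≤ (1 + c) Σ̂` in the Loewner order, where the determinant is
monotone, so `0 ≤ log det Σ̃ - log det Σ̂ ≤ N log (1 + c)`. As `c ≤ t = εN^{3/2} / σ_w² < 1`,
the claimed bounds follow from `log (1 + c) ≤ c ≤ t ≤ -log (1 - t)`.
-/

open Matrix

lemma abs_sinc_le_one (y : ℝ) : |sinc y| ≤ 1 := by
  unfold sinc
  split_ifs with h
  · simp
  · rw [abs_div, div_le_one (abs_pos.mpr (mul_ne_zero Real.pi_ne_zero h))]
    exact Real.abs_sin_le_abs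

open scoped MatrixOrder

namespace Matrix

variable {n : Type*}

lemma one_le_det_of_one_le [Fintype n] [DecidableEq n] {M : Matrix n n ℝ} (h : 1 ≤ M) :
    1 ≤ M.det := by
  have hM : M.IsHermitian := by
    simpa using isHermitian_one.add (le_iff.mp h).isHermitian
  have hspec := (algebraMap_le_iff_le_spectrum (r := (1 : ℝ)) (a := M) hM.isSelfAdjoint).mp
    (by simpa using h)
  rw [hM.det_eq_prod_eigenvalues]
  exact_mod_cast Finset.one_le_prod fun i _ => hspec _ (hM.eigenvalues_mem_spectrum_real i)

/-- Conjugating by `A^{-1/2}` reduces the claim to `1 ≤ M → 1 ≤ det M`. -/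
lemma det_le_det_of_le [Fintype n] [DecidableEq n] {A B : Matrix n n ℝ} (hA : A.PosDef)
    (hAB : A ≤ B) : A.det ≤ B.det := by
  set S := CFC.sqrt A
  have hSS : S * S = A := CFC.sqrt_mul_sqrt_self A hA.posSemidef.nonneg
  have hSunit : IsUnit S.det := by
    have hpos := hA.det_pos
    rw [← hSS, det_mul] at hpos
    exact isUnit_iff_ne_zero.mpr fun h => by simp [h] at hpos
  have hSinv : IsSelfAdjoint S⁻¹ := by
    rw [IsSelfAdjoint, star_eq_conjTranspose, conjTranspose_nonsing_inv, ← star_eq_conjTranspose,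
      (CFC.sqrt_nonneg A).isSelfAdjoint.star_eq]
  set M := S⁻¹ * B * S⁻¹
  have hM : 1 ≤ M := by
    have h := hSinv.conjugate_le_conjugate hAB
    rwa [← hSS, ← mul_assoc, nonsing_inv_mul _ hSunit, one_mul,
      mul_nonsing_inv _ hSunit] at h
  have hB : B = S * M * S := by
    simp only [M, ← mul_assoc, mul_nonsing_inv _ hSunit, one_mul]
    rw [mul_assoc, nonsing_inv_mul _ hSunit, mul_one]
  have hdetB : B.det = A.det * M.det := by
    rw [← hSS, det_mul]
    conv_lhs => rw [hB, det_mul, det_mul]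
    ring
  rw [hdetB]
  exact le_mul_of_one_le_right hA.det_pos.le (one_le_det_of_one_le hM)

lemma posDef_of_smul_one_le [DecidableEq n] {A : Matrix n n ℝ} {s : ℝ} (hs : 0 < s)
    (hA : s • 1 ≤ A) : A.PosDef := by
  simpa using (PosDef.one.smul hs).add_posSemidef (le_iff.mp hA)

lemma det_add_le_pow_mul_det [Fintype n] [DecidableEq n] {A E : Matrix n n ℝ} {s δ : ℝ}
    (hs : 0 < s) (hδ : 0 ≤ δ) (hA : s • 1 ≤ A) (hE₀ : 0 ≤ E) (hE : E ≤ δ • 1) :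
    (A + E).det ≤ (1 + δ / s) ^ Fintype.card n * A.det := by
  have hle : A + E ≤ (1 + δ / s) • A := by
    rw [le_iff]
    have hsplit : (1 + δ / s) • A - (A + E) = (δ / s) • (A - s • 1) + (δ • 1 - E) := by
      rw [smul_sub, smul_smul, div_mul_cancel₀ δ hs.ne']
      module
    rw [hsplit]
    exact ((le_iff.mp hA).smul (div_nonneg hδ hs.le)).add (le_iff.mp hE)
  simpa [det_smul] using
    det_le_det_of_le ((posDef_of_smul_one_le hs hA).add_posSemidef (nonneg_iff_posSemidef.mp hE₀))
      hle

end Matrix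

section WeightedGram

variable {ι n : Type*}

/-- The covariance `∑ₘ w m • u m (u m)ᵀ` of `∑ₘ βₘ u m` with independent `βₘ` of variance `w m`. -/
noncomputable def weightedGram (w : ι → ℝ) (u : ι → n → ℝ) : Matrix n n ℝ :=
  of fun i j => ∑' m, u m i * u m j * w m

lemma sq_dotProduct_le_card_mul [Fintype n] {a v : n → ℝ} (ha : ∀ i, |a i| ≤ 1) :
    (a ⬝ᵥ v) ^ 2 ≤ Fintype.card n * (v ⬝ᵥ v) := by
  calc (a ⬝ᵥ v) ^ 2 ≤ (∑ i, |v i|) ^ 2 := by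
        rw [← sq_abs]
        gcongr
        refine (Finset.abs_sum_le_sum_abs _ _).trans (Finset.sum_le_sum fun i _ => ?_)
        rw [abs_mul]
        exact mul_le_of_le_one_left (abs_nonneg _) (ha i)
    _ ≤ Fintype.card n * ∑ i, |v i| ^ 2 := sq_sum_le_card_mul_sum_sq
    _ = Fintype.card n * (v ⬝ᵥ v) := by simp [dotProduct, sq]

lemma summable_weightedGram_entry {w : ι → ℝ} {u : ι → n → ℝ} (hw : Summable w)
    (hu : ∀ m i, |u m i| ≤ 1) (i j : n) : Summable fun m => u m i * u m j * w m := by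
  refine hw.abs.of_norm_bounded fun m => ?_
  rw [Real.norm_eq_abs, abs_mul, abs_mul]
  exact mul_le_of_le_one_left (abs_nonneg _) (mul_le_one₀ (hu m i) (abs_nonneg _) (hu m j))

lemma weightedGram_isHermitian (w : ι → ℝ) (u : ι → n → ℝ) : (weightedGram w u).IsHermitian := by
  ext i j
  simp only [conjTranspose_apply, star_trivial, weightedGram, of_apply]
  exact tsum_congr fun m => by ring

lemma dotProduct_weightedGram_mulVec [Fintype n] {w : ι → ℝ} {u : ι → n → ℝ}
    (hsum : ∀ i j, Summable fun m => u m i * u m j * w m) (v : n → ℝ) :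
    v ⬝ᵥ (weightedGram w u *ᵥ v) = ∑' m, w m * (u m ⬝ᵥ v) ^ 2 := by
  have hterm : ∀ i j, Summable fun m => v i * (u m i * u m j * w m * v j) :=
    fun i j => ((hsum i j).mul_right _).mul_left _
  calc v ⬝ᵥ (weightedGram w u *ᵥ v)
      = ∑ i, ∑ j, ∑' m, v i * (u m i * u m j * w m * v j) := by
        simp only [dotProduct, mulVec, weightedGram, of_apply, Finset.mul_sum, tsum_mul_left,
          tsum_mul_right]
    _ = ∑ i, ∑' m, ∑ j, v i * (u m i * u m j * w m * v j) :=
        Finset.sum_congr rfl fun i _ => (Summable.tsum_finsetSum fun j _ => hterm i j).symm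
    _ = ∑' m, ∑ i, ∑ j, v i * (u m i * u m j * w m * v j) :=
        (Summable.tsum_finsetSum fun i _ => summable_sum fun j _ => hterm i j).symm
    _ = ∑' m, w m * (u m ⬝ᵥ v) ^ 2 := by
        refine tsum_congr fun m => ?_
        rw [dotProduct, sq, Finset.sum_mul_sum, Finset.mul_sum]
        refine Finset.sum_congr rfl fun i _ => ?_
        rw [Finset.mul_sum]
        exact Finset.sum_congr rfl fun j _ => by ring

lemma weightedGram_nonneg [Fintype n] {w : ι → ℝ} {u : ι → n → ℝ} (hw : ∀ m, 0 ≤ w m)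
    (hsum : ∀ i j, Summable fun m => u m i * u m j * w m) : 0 ≤ weightedGram w u := by
  refine nonneg_iff_posSemidef.mpr
    (posSemidef_iff_dotProduct_mulVec.mpr ⟨weightedGram_isHermitian w u, fun v => ?_⟩)
  rw [star_trivial, dotProduct_weightedGram_mulVec hsum]
  exact tsum_nonneg fun m => mul_nonneg (hw m) (sq_nonneg _)

lemma weightedGram_le_smul_one [Fintype n] [DecidableEq n] {w : ι → ℝ} {u : ι → n → ℝ}
    (hw : ∀ m, 0 ≤ w m) (hwsum : Summable w) (hu : ∀ m i, |u m i| ≤ 1) :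
    weightedGram w u ≤ ((∑' m, w m) * Fintype.card n) • 1 := by
  have hsum := summable_weightedGram_entry hwsum hu
  refine le_iff.mpr (posSemidef_iff_dotProduct_mulVec.mpr
    ⟨(isHermitian_one.smul (.all _)).sub (weightedGram_isHermitian w u), fun v => ?_⟩)
  rw [star_trivial, sub_mulVec, dotProduct_sub, dotProduct_weightedGram_mulVec hsum, smul_mulVec,
    one_mulVec, dotProduct_smul, smul_eq_mul, sub_nonneg, mul_assoc, ← tsum_mul_right]
  have hbound : ∀ m, w m * (u m ⬝ᵥ v) ^ 2 ≤ w m * (Fintype.card n * (v ⬝ᵥ v)) :=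
    fun m => mul_le_mul_of_nonneg_left (sq_dotProduct_le_card_mul (hu m)) (hw m)
  have hg := hwsum.mul_right (Fintype.card n * (v ⬝ᵥ v))
  have hf := hg.of_nonneg_of_le (fun m => mul_nonneg (hw m) (sq_nonneg _)) hbound
  exact hf.tsum_le_tsum hbound hg

lemma weightedGram_add {w₁ w₂ : ι → ℝ} {u : ι → n → ℝ}
    (h₁ : ∀ i j, Summable fun m => u m i * u m j * w₁ m)
    (h₂ : ∀ i j, Summable fun m => u m i * u m j * w₂ m) :
    weightedGram (w₁ + w₂) u = weightedGram w₁ u + weightedGram w₂ u := by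
  ext i j
  simp only [weightedGram, Matrix.add_apply, of_apply, Pi.add_apply, mul_add]
  exact (h₁ i j).tsum_add (h₂ i j)

lemma weightedGram_ite_mem [DecidableEq ι] (s : Finset ι) (w : ι → ℝ) (u : ι → n → ℝ) :
    weightedGram (fun m => if m ∈ s then w m else 0) u =
      of fun i j => ∑ m ∈ s, u m i * u m j * w m := by
  ext i j
  simp only [weightedGram, of_apply, mul_ite, mul_zero]
  rw [tsum_eq_sum fun m hm => if_neg hm]
  exact Finset.sum_congr rfl fun m hm => if_pos hm

lemma det_truncated_covariance_bounds [DecidableEq ι] [Fintype n] [DecidableEq n] {σ : ι → ℝ}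
    {u : ι → n → ℝ} (hσ : ∀ m, 0 ≤ σ m) (hσsum : Summable σ) (hu : ∀ m i, |u m i| ≤ 1)
    (s : Finset ι) {τ : ℝ} (hτ : 0 < τ) :
    0 < (τ • 1 + weightedGram (fun m => if m ∈ s then σ m else 0) u).det ∧
    (τ • 1 + weightedGram (fun m => if m ∈ s then σ m else 0) u).det ≤
      (τ • 1 + weightedGram σ u).det ∧
    (τ • 1 + weightedGram σ u).det ≤
      (1 + (∑' m, if m ∈ s then 0 else σ m) * Fintype.card n / τ) ^ Fintype.card n *
        (τ • 1 + weightedGram (fun m => if m ∈ s then σ m else 0) u).det := by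
  set head : ι → ℝ := fun m => if m ∈ s then σ m else 0
  set tail : ι → ℝ := fun m => if m ∈ s then 0 else σ m
  have hhead : ∀ m, 0 ≤ head m ∧ head m ≤ σ m := fun m => by
    by_cases hm : m ∈ s <;> simp [head, hm, hσ m]
  have htail : ∀ m, 0 ≤ tail m ∧ tail m ≤ σ m := fun m => by
    by_cases hm : m ∈ s <;> simp [tail, hm, hσ m]
  have htail_sum : Summable tail :=
    hσsum.of_nonneg_of_le (fun m => (htail m).1) fun m => (htail m).2
  have htail_entry := summable_weightedGram_entry htail_sum hu
  have hhead_entry := summable_weightedGram_entry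
    (hσsum.of_nonneg_of_le (fun m => (hhead m).1) fun m => (hhead m).2) hu
  have hσ_eq : σ = head + tail := funext fun m => by
    by_cases hm : m ∈ s <;> simp [head, tail, hm]
  have hsplit : τ • 1 + weightedGram σ u = (τ • 1 + weightedGram head u) + weightedGram tail u := by
    rw [add_assoc, ← weightedGram_add hhead_entry htail_entry, ← hσ_eq]
  have hA : τ • 1 ≤ τ • 1 + weightedGram head u :=
    le_add_of_nonneg_right (weightedGram_nonneg (fun m => (hhead m).1) hhead_entry)
  have hA_pd := posDef_of_smul_one_le hτ hA
  have hE₀ : 0 ≤ weightedGram tail u := weightedGram_nonneg (fun m => (htail m).1) htail_entry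
  have htail_tsum : 0 ≤ ∑' m, tail m := tsum_nonneg fun m => (htail m).1
  rw [hsplit]
  exact ⟨hA_pd.det_pos, det_le_det_of_le hA_pd (le_add_of_nonneg_right hE₀),
    det_add_le_pow_mul_det hτ (by positivity) hA hE₀
      (weightedGram_le_smul_one (fun m => (htail m).1) htail_sum hu)⟩

end WeightedGram

lemma log_sub_log_bounds_of_le_one_add_pow_mul {D D' c t : ℝ} (N : ℕ) (hD : 0 < D)
    (hlo : D ≤ D') (hhi : D' ≤ (1 + c) ^ N * D) (hc : 0 ≤ c) (hct : c ≤ t) (ht : t < 1) :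
    -N * Real.log (1 + t) ≤ Real.log D' - Real.log D ∧
      Real.log D' - Real.log D ≤ -N * Real.log (1 - t) := by
  have hlog_hi : Real.log D' - Real.log D ≤ N * Real.log (1 + c) := by
    have h := Real.log_le_log (hD.trans_le hlo) hhi
    rw [Real.log_mul (by positivity) hD.ne', Real.log_pow] at h
    linarith
  have hc_log : Real.log (1 + c) ≤ -Real.log (1 - t) := by
    linarith [Real.log_le_sub_one_of_pos (by linarith : 0 < 1 + c),
      Real.log_le_sub_one_of_pos (by linarith : 0 < 1 - t)]
  constructor
  · have h₁ : 0 ≤ Real.log D' - Real.log D := sub_nonneg.mpr (Real.log_le_log hD hlo)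
    have h₂ : 0 ≤ N * Real.log (1 + t) := by
      have := Real.log_nonneg (by linarith : (1 : ℝ) ≤ 1 + t)
      positivity
    linarith
  · calc Real.log D' - Real.log D ≤ N * Real.log (1 + c) := hlog_hi
      _ ≤ N * -Real.log (1 - t) := by gcongr
      _ = -N * Real.log (1 - t) := by ring

theorem truncation_mutual_info_bound_general
    (N : ℕ) (hN : 0 < N) (lam : ℝ)
    (x : Fin N → ℝ)
    (σ : ℤ → ℝ) (hσpos : ∀ m, 0 ≤ σ m) (hσsum : Summable σ)
    (Ms : Finset ℤ) (σw : ℝ) (hσw : 0 < σw)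
    (ε : ℝ) (hε : ε = ∑' m : ℤ, (if m ∈ Ms then 0 else σ m))
    (hsmall : ε < σw ^ 2 * (N : ℝ) ^ (-(3 : ℝ) / 2))
    (Sfull Strunc : Matrix (Fin N) (Fin N) ℝ)
    (hfull : ∀ i j, Sfull i j =
      (∑' m : ℤ, sinc ((m : ℝ) + 2 / lam * x i) * sinc ((m : ℝ) + 2 / lam * x j) * σ m)
        + (if i = j then σw ^ 2 else 0))
    (htrunc : ∀ i j, Strunc i j =
      (∑ m ∈ Ms, sinc ((m : ℝ) + 2 / lam * x i) * sinc ((m : ℝ) + 2 / lam * x j) * σ m)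
        + (if i = j then σw ^ 2 else 0))
    (Ifull Itrunc : ℝ)
    (hIfull : Ifull = Real.log Sfull.det - (N : ℝ) * Real.log (σw ^ 2))
    (hItrunc : Itrunc = Real.log Strunc.det - (N : ℝ) * Real.log (σw ^ 2)) :
    -(N : ℝ) * Real.log (1 + ε * (N : ℝ) ^ ((3 : ℝ) / 2) / σw ^ 2) ≤ Ifull - Itrunc ∧
    Ifull - Itrunc ≤ -(N : ℝ) * Real.log (1 - ε * (N : ℝ) ^ ((3 : ℝ) / 2) / σw ^ 2) := by
  set k : ℤ → Fin N → ℝ := fun m i => sinc ((m : ℝ) + 2 / lam * x i)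
  have hStrunc : Strunc = σw ^ 2 • 1 + weightedGram (fun m => if m ∈ Ms then σ m else 0) k := by
    ext i j
    rw [htrunc, weightedGram_ite_mem]
    by_cases hij : i = j <;> simp [hij, k, add_comm]
  have hSfull : Sfull = σw ^ 2 • 1 + weightedGram σ k := by
    ext i j
    rw [hfull]
    by_cases hij : i = j <;> simp [hij, k, weightedGram, add_comm]
  have hdet := det_truncated_covariance_bounds (u := k) hσpos hσsum
    (fun _ _ => abs_sinc_le_one _) Ms (by positivity : 0 < σw ^ 2)
  rw [← hStrunc, ← hSfull, ← hε, Fintype.card_fin] at hdet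
  obtain ⟨hdet_pos, hdet_lo, hdet_hi⟩ := hdet
  have hε₀ : 0 ≤ ε := hε ▸ tsum_nonneg fun m => by by_cases hm : m ∈ Ms <;> simp [hm, hσpos m]
  have hct : ε * N / σw ^ 2 ≤ ε * (N : ℝ) ^ ((3 : ℝ) / 2) / σw ^ 2 := by
    gcongr
    exact Real.self_le_rpow_of_one_le (by exact_mod_cast hN) (by norm_num)
  have ht : ε * (N : ℝ) ^ ((3 : ℝ) / 2) / σw ^ 2 < 1 := by
    rw [neg_div, Real.rpow_neg (by positivity), ← div_eq_mul_inv,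
      lt_div_iff₀ (by positivity)] at hsmall
    rwa [div_lt_one (by positivity)]
  rw [hIfull, hItrunc, sub_sub_sub_cancel_right]
  exact log_sub_log_bounds_of_le_one_add_pow_mul N hdet_pos hdet_lo hdet_hi (by positivity) hct ht

/-- Truncation bound (Lemma 1): in the full model f̃_n = Σ_{m∈ℤ} K_{nm}β_m + w_n
and the truncated model f̂_n = Σ_{m∈Ms} K_{nm}β_m + w_n with
K_{nm} = sinc(m + (2/λ)x_n), β_m ∼ CN(0, σ_m²) independent, w ∼ CN(0, σ_w² I),
the corresponding Gaussian mutual informations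
I(f ; β) = log det Σ_f − N log σ_w² satisfy, whenever
ε = Σ_{m∉Ms} σ_m² < σ_w² N^{−3/2},
−N log(1 + εN^{3/2}/σ_w²) ≤ I(f̃;{β_m}) − I(f̂;β) ≤ −N log(1 − εN^{3/2}/σ_w²). -/
theorem truncation_mutual_info_bound
    (N : ℕ) (hN : 0 < N) (lam : ℝ) (hlam : 0 < lam)
    (x : Fin N → ℝ)
    (σ : ℤ → ℝ) (hσpos : ∀ m, 0 ≤ σ m) (hσsum : Summable σ)
    (Ms : Finset ℤ) (σw : ℝ) (hσw : 0 < σw)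
    (ε : ℝ) (hε : ε = ∑' m : ℤ, (if m ∈ Ms then 0 else σ m))
    (hsmall : ε < σw ^ 2 * (N : ℝ) ^ (-(3 : ℝ) / 2))
    (Sfull Strunc : Matrix (Fin N) (Fin N) ℝ)
    (hfull : ∀ i j, Sfull i j =
      (∑' m : ℤ, sinc ((m : ℝ) + 2 / lam * x i) * sinc ((m : ℝ) + 2 / lam * x j) * σ m)
        + (if i = j then σw ^ 2 else 0))
    (htrunc : ∀ i j, Strunc i j =
      (∑ m ∈ Ms, sinc ((m : ℝ) + 2 / lam * x i) * sinc ((m : ℝ) + 2 / lam * x j) * σ m)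
        + (if i = j then σw ^ 2 else 0))
    (Ifull Itrunc : ℝ)
    (hIfull : Ifull = Real.log Sfull.det - (N : ℝ) * Real.log (σw ^ 2))
    (hItrunc : Itrunc = Real.log Strunc.det - (N : ℝ) * Real.log (σw ^ 2)) :
    -(N : ℝ) * Real.log (1 + ε * (N : ℝ) ^ ((3 : ℝ) / 2) / σw ^ 2) ≤ Ifull - Itrunc ∧
    Ifull - Itrunc ≤ -(N : ℝ) * Real.log (1 - ε * (N : ℝ) ^ ((3 : ℝ) / 2) / σw ^ 2) :=
  truncation_mutual_info_bound_general N hN lam x σ hσpos hσsum Ms σw hσw ε hε hsmall Sfull Strunc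
    hfull htrunc Ifull Itrunc hIfull hItrunc
end
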